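/- Let d be a positive integer, let Q be an indexed set of polynomials, let c be a cut-off function for Q, let w be a positive integer, let I be an ideal of ℝ[x], and let p be a polynomial of degree at most 2d. If Q ⊢^{c,I}_{w,2} R − x² ≥ 0 for every variable x for some R ∈ ℝ, R ≥ 0, then sup{r ∈ ℝ : Q ⊢^{c,I}_{w,2d} p ≥ r} = inf{E(p) : E ∈ ℰ^{c,I}_{w,2d}(Q)} (as elements of ℝ ∪ {±∞}). Moreover, if the set ℰ^{c,I}_{w,2d}(Q) is nonempty, then there is a pseudo-expectation achieving the infimum, i.e., min{E(p) : E ∈ ℰ^{c,I}_{w,2d}(Q)} is well-defined. -/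

import Mathlib

open MvPolynomial

noncomputable section

/-- The sum of squares of a list of polynomials. -/
def sosOfI {σ : Type} (l : List (MvPolynomial σ ℝ)) : MvPolynomial σ ℝ :=
  (l.map (· ^ 2)).sum

/-- A Positivstellensatz proof mod the ideal `I` of `goal ≥ 0` from the inequality
constraints `q j ≥ 0` (`j : Fin ℓ`) and the equality constraints `p j = 0`
(`j : Fin m`). -/
structure PSProofMod (σ : Type) (ℓ m : ℕ) (q : Fin ℓ → MvPolynomial σ ℝ)
    (p : Fin m → MvPolynomial σ ℝ) (I : Ideal (MvPolynomial σ ℝ))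
    (goal : MvPolynomial σ ℝ) : Type where
  Js : Finset (Finset (Fin ℓ))
  empty_not_mem : ∅ ∉ Js
  r0 : List (MvPolynomial σ ℝ)
  r : Finset (Fin ℓ) → List (MvPolynomial σ ℝ)
  t : Fin m → MvPolynomial σ ℝ
  identity : goal - (sosOfI r0 + ∑ J ∈ Js, sosOfI (r J) * ∏ j ∈ J, q j
      + ∑ j, t j * p j) ∈ I

/-- A cut-off function for the system `q, p`. -/
def IsCutoffI {σ : Type} {ℓ m : ℕ} (q : Fin ℓ → MvPolynomial σ ℝ)
    (p : Fin m → MvPolynomial σ ℝ) (c : Finset (Fin ℓ) ⊕ Fin m → ℕ) : Prop :=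
  (∀ J : Finset (Fin ℓ), ∑ j ∈ J, (q j).totalDegree ≤ c (Sum.inl J)) ∧
  (∀ j : Fin m, (p j).totalDegree ≤ c (Sum.inr j))

/-- The proof has degree mod `c` at most `d` (the zero polynomial having
degree `−∞`). -/
def PSProofMod.degreeModLE {σ : Type} {ℓ m : ℕ} {q : Fin ℓ → MvPolynomial σ ℝ}
    {p : Fin m → MvPolynomial σ ℝ} {I : Ideal (MvPolynomial σ ℝ)}
    {goal : MvPolynomial σ ℝ} (π : PSProofMod σ ℓ m q p I goal)
    (c : Finset (Fin ℓ) ⊕ Fin m → ℕ) (d : ℕ) : Prop :=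
  goal.totalDegree ≤ d ∧ (sosOfI π.r0).totalDegree ≤ d ∧
  (∀ J ∈ π.Js, sosOfI (π.r J) ≠ 0 → (sosOfI (π.r J)).totalDegree + c (Sum.inl J) ≤ d) ∧
  (∀ j, π.t j ≠ 0 → (π.t j).totalDegree + c (Sum.inr j) ≤ d)

/-- The proof has product-width at most `w`. -/
def PSProofMod.widthLE {σ : Type} {ℓ m : ℕ} {q : Fin ℓ → MvPolynomial σ ℝ}
    {p : Fin m → MvPolynomial σ ℝ} {I : Ideal (MvPolynomial σ ℝ)}
    {goal : MvPolynomial σ ℝ} (π : PSProofMod σ ℓ m q p I goal) (w : ℕ) : Prop :=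
  ∀ J ∈ π.Js, J.card ≤ w

/-- `PS^{c,I}_{w,d}(Q)`: the cone of polynomials of degree at most `d` with a PS
proof mod `I` of degree mod `c` at most `d` and product-width at most `w`.
`Q ⊢^{c,I}_{w,d} a ≥ b` is expressed as `a - b ∈ PSconeI …`. -/
def PSconeI (σ : Type) (ℓ m : ℕ) (q : Fin ℓ → MvPolynomial σ ℝ)
    (p : Fin m → MvPolynomial σ ℝ) (I : Ideal (MvPolynomial σ ℝ))
    (c : Finset (Fin ℓ) ⊕ Fin m → ℕ) (w d : ℕ) : Set (MvPolynomial σ ℝ) :=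
  {g | g.totalDegree ≤ d ∧
    ∃ π : PSProofMod σ ℓ m q p I g, π.degreeModLE c d ∧ π.widthLE w}

/-- `ℰ^{c,I}_{w,d}(Q)`: pseudo-expectations, i.e. linear functionals on the space
of polynomials of degree at most `d` sending `1` to `1` and the cone to
nonnegatives. -/
def PseudoExpI (σ : Type) (ℓ m : ℕ) (q : Fin ℓ → MvPolynomial σ ℝ)
    (p : Fin m → MvPolynomial σ ℝ) (I : Ideal (MvPolynomial σ ℝ))
    (c : Finset (Fin ℓ) ⊕ Fin m → ℕ) (w d : ℕ) :
    Set ((restrictTotalDegree σ ℝ d) →ₗ[ℝ] ℝ) :=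
  {E | (∀ g : restrictTotalDegree σ ℝ d, (g : MvPolynomial σ ℝ) = 1 → E g = 1) ∧
    (∀ g : restrictTotalDegree σ ℝ d,
      (g : MvPolynomial σ ℝ) ∈ PSconeI σ ℓ m q p I c w d → 0 ≤ E g)}

/-!
Write `Σ` for the cone `PS^{c,I}_{w,2d}(Q)`. From `R - x_v² ∈ Σ` one gets by induction
`R^k - u² ∈ Σ` for every monomial `u` of degree `k ≤ d`. A monomial of degree `≤ 2d` factors as
`u₁u₂` with `deg uᵢ ≤ d`, and `2u₁u₂ + M₁ + M₂ = (u₁ + u₂)² + (M₁ - u₁²) + (M₂ - u₂²)` (likewise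
with `-u₂`), so every polynomial of degree `≤ 2d` is bounded below by a constant modulo `Σ`:
the constant `1` is an order unit.

Weak duality `r ≤ E(p)` is immediate. If `s = sup {r | p - r ∈ Σ}` is finite, the functional
`a ↦ a` on `ℝ · 1` is nonnegative on `Σ + ℝ≥0 · (s - p)`, and the M. Riesz extension theorem,
whose density hypothesis is exactly the order-unit property, extends it to a pseudo-expectation
`E` with `E(p) = s`. If the supremum is infinite there is no pseudo-expectation at all.
-/

section SumOfSquares

variable {σ : Type}

@[simp] lemma sosOfI_nil : sosOfI ([] : List (MvPolynomial σ ℝ)) = 0 := rfl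

@[simp] lemma sosOfI_singleton (f : MvPolynomial σ ℝ) : sosOfI [f] = f ^ 2 := by
  simp [sosOfI]

@[simp] lemma sosOfI_append (l₁ l₂ : List (MvPolynomial σ ℝ)) :
    sosOfI (l₁ ++ l₂) = sosOfI l₁ + sosOfI l₂ := by
  simp [sosOfI]

@[simp] lemma sosOfI_map_mul (f : MvPolynomial σ ℝ) (l : List (MvPolynomial σ ℝ)) :
    sosOfI (l.map (f * ·)) = f ^ 2 * sosOfI l := by
  simp [sosOfI, mul_pow, Function.comp_def, List.sum_map_mul_left]

end SumOfSquares

def DegAddLE {σ R : Type*} [CommSemiring R] (a : MvPolynomial σ R) (k D : ℕ) : Prop :=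
  a ≠ 0 → a.totalDegree + k ≤ D

namespace DegAddLE

variable {σ R : Type*} [CommSemiring R] {a b : MvPolynomial σ R} {k e D : ℕ}

lemma add (ha : DegAddLE a k D) (hb : DegAddLE b k D) : DegAddLE (a + b) k D := by
  intro hab
  by_cases ha0 : a = 0
  · subst ha0; simpa using hb (by simpa using hab)
  by_cases hb0 : b = 0
  · subst hb0; simpa using ha (by simpa using hab)
  have := totalDegree_add a b
  have := ha ha0
  have := hb hb0
  omega

lemma mul_left (hb : DegAddLE b k e) (hD : a.totalDegree + e ≤ D) : DegAddLE (a * b) k D := by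
  intro hab
  have := totalDegree_mul a b
  have := hb (right_ne_zero_of_mul hab)
  omega

end DegAddLE

namespace PSProofMod

variable {σ : Type} {ℓ m : ℕ} {q : Fin ℓ → MvPolynomial σ ℝ} {p : Fin m → MvPolynomial σ ℝ}
  {I : Ideal (MvPolynomial σ ℝ)} {c : Finset (Fin ℓ) ⊕ Fin m → ℕ} {g g₁ g₂ : MvPolynomial σ ℝ}

def one : PSProofMod σ ℓ m q p I 1 where
  Js := ∅
  empty_not_mem := Finset.notMem_empty _
  r0 := [1]
  r _ := []
  t _ := 0
  identity := by simp

/-- `π.r` with the junk values outside `π.Js` replaced by `[]`. -/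
def rOn (π : PSProofMod σ ℓ m q p I g) (J : Finset (Fin ℓ)) : List (MvPolynomial σ ℝ) :=
  if J ∈ π.Js then π.r J else []

lemma sum_rOn_of_subset (π : PSProofMod σ ℓ m q p I g) {Js : Finset (Finset (Fin ℓ))}
    (h : π.Js ⊆ Js) :
    ∑ J ∈ Js, sosOfI (π.rOn J) * ∏ j ∈ J, q j = ∑ J ∈ π.Js, sosOfI (π.r J) * ∏ j ∈ J, q j := by
  simp only [rOn, apply_ite sosOfI, sosOfI_nil, ite_mul, zero_mul]
  rw [Finset.sum_ite_mem, Finset.inter_eq_right.2 h]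

lemma degAddLE_rOn {π : PSProofMod σ ℓ m q p I g} {D : ℕ} (h : π.degreeModLE c D)
    (J : Finset (Fin ℓ)) : DegAddLE (sosOfI (π.rOn J)) (c (.inl J)) D := by
  unfold rOn
  split_ifs with hJ
  · exact h.2.2.1 J hJ
  · simp [DegAddLE]

def add (π₁ : PSProofMod σ ℓ m q p I g₁) (π₂ : PSProofMod σ ℓ m q p I g₂) :
    PSProofMod σ ℓ m q p I (g₁ + g₂) where
  Js := π₁.Js ∪ π₂.Js
  empty_not_mem := by simp [π₁.empty_not_mem, π₂.empty_not_mem]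
  r0 := π₁.r0 ++ π₂.r0
  r J := π₁.rOn J ++ π₂.rOn J
  t j := π₁.t j + π₂.t j
  identity := by
    convert I.add_mem π₁.identity π₂.identity using 1
    simp only [sosOfI_append, add_mul, Finset.sum_add_distrib,
      π₁.sum_rOn_of_subset Finset.subset_union_left,
      π₂.sum_rOn_of_subset Finset.subset_union_right]
    ring

lemma degreeModLE_add {π₁ : PSProofMod σ ℓ m q p I g₁} {π₂ : PSProofMod σ ℓ m q p I g₂}
    {D : ℕ} (h₁ : π₁.degreeModLE c D) (h₂ : π₂.degreeModLE c D) :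
    (π₁.add π₂).degreeModLE c D := by
  refine ⟨(totalDegree_add _ _).trans (max_le h₁.1 h₂.1), ?_, ?_, ?_⟩
  · simpa only [add, sosOfI_append] using (totalDegree_add _ _).trans (max_le h₁.2.1 h₂.2.1)
  · intro J _
    simpa only [add, sosOfI_append, DegAddLE] using (degAddLE_rOn h₁ J).add (degAddLE_rOn h₂ J)
  · intro j
    exact DegAddLE.add (h₁.2.2.2 j) (h₂.2.2.2 j)

lemma widthLE_add {π₁ : PSProofMod σ ℓ m q p I g₁} {π₂ : PSProofMod σ ℓ m q p I g₂} {w : ℕ}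
    (h₁ : π₁.widthLE w) (h₂ : π₂.widthLE w) : (π₁.add π₂).widthLE w := by
  intro J hJ
  rcases Finset.mem_union.1 hJ with hJ | hJ
  exacts [h₁ J hJ, h₂ J hJ]

def sqMul (f : MvPolynomial σ ℝ) (π : PSProofMod σ ℓ m q p I g) :
    PSProofMod σ ℓ m q p I (f ^ 2 * g) where
  Js := π.Js
  empty_not_mem := π.empty_not_mem
  r0 := π.r0.map (f * ·)
  r J := (π.r J).map (f * ·)
  t j := f ^ 2 * π.t j
  identity := by
    convert I.mul_mem_left (f ^ 2) π.identity using 1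
    simp only [sosOfI_map_mul, mul_sub, mul_add, Finset.mul_sum, mul_assoc]

lemma degreeModLE_sqMul {π : PSProofMod σ ℓ m q p I g} {f : MvPolynomial σ ℝ} {e D : ℕ}
    (h : π.degreeModLE c e) (hD : 2 * f.totalDegree + e ≤ D) : (π.sqMul f).degreeModLE c D := by
  have hf : (f ^ 2).totalDegree + e ≤ D := (Nat.add_le_add_right (totalDegree_pow f 2) e).trans hD
  have hmul {a : MvPolynomial σ ℝ} (ha : a.totalDegree ≤ e) : (f ^ 2 * a).totalDegree ≤ D :=
    (totalDegree_mul _ _).trans ((Nat.add_le_add_left ha _).trans hf)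
  refine ⟨hmul h.1, ?_, fun J hJ => ?_, fun j => DegAddLE.mul_left (h.2.2.2 j) hf⟩
  · simpa only [sqMul, sosOfI_map_mul] using hmul h.2.1
  · simpa only [sqMul, sosOfI_map_mul, DegAddLE] using DegAddLE.mul_left (h.2.2.1 J hJ) hf

end PSProofMod

section PSCone

variable {σ : Type} {ℓ m : ℕ} {q : Fin ℓ → MvPolynomial σ ℝ} {p : Fin m → MvPolynomial σ ℝ}
  {I : Ideal (MvPolynomial σ ℝ)} {c : Finset (Fin ℓ) ⊕ Fin m → ℕ} {w : ℕ}
  {f g g₁ g₂ : MvPolynomial σ ℝ} {e D : ℕ}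

lemma one_mem_PSconeI (D : ℕ) : (1 : MvPolynomial σ ℝ) ∈ PSconeI σ ℓ m q p I c w D :=
  ⟨by simp, .one, ⟨by simp, by simp [PSProofMod.one], by simp [PSProofMod.one],
    by simp [PSProofMod.one]⟩, by simp [PSProofMod.widthLE, PSProofMod.one]⟩

lemma add_mem_PSconeI (h₁ : g₁ ∈ PSconeI σ ℓ m q p I c w D)
    (h₂ : g₂ ∈ PSconeI σ ℓ m q p I c w D) : g₁ + g₂ ∈ PSconeI σ ℓ m q p I c w D := by
  obtain ⟨-, π₁, hπ₁, hw₁⟩ := h₁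
  obtain ⟨-, π₂, hπ₂, hw₂⟩ := h₂
  have hπ := PSProofMod.degreeModLE_add hπ₁ hπ₂
  exact ⟨hπ.1, π₁.add π₂, hπ, PSProofMod.widthLE_add hw₁ hw₂⟩

lemma sq_mul_mem_PSconeI (h : g ∈ PSconeI σ ℓ m q p I c w e) (hD : 2 * f.totalDegree + e ≤ D) :
    f ^ 2 * g ∈ PSconeI σ ℓ m q p I c w D := by
  obtain ⟨-, π, hπ, hw⟩ := h
  have hπ' := PSProofMod.degreeModLE_sqMul (f := f) hπ hD
  exact ⟨hπ'.1, π.sqMul f, hπ', hw⟩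

lemma PSconeI_mono (h : e ≤ D) : PSconeI σ ℓ m q p I c w e ⊆ PSconeI σ ℓ m q p I c w D :=
  fun g hg => by simpa using sq_mul_mem_PSconeI (f := 1) hg (by simpa using h)

lemma sq_mem_PSconeI (hD : 2 * f.totalDegree ≤ D) : f ^ 2 ∈ PSconeI σ ℓ m q p I c w D := by
  simpa using sq_mul_mem_PSconeI (one_mem_PSconeI 0) (by simpa using hD)

lemma smul_mem_PSconeI {a : ℝ} (ha : 0 ≤ a) (h : g ∈ PSconeI σ ℓ m q p I c w D) :
    a • g ∈ PSconeI σ ℓ m q p I c w D := by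
  have : a • g = C (√a) ^ 2 * g := by rw [← map_pow, Real.sq_sqrt ha, smul_eq_C_mul]
  exact this ▸ sq_mul_mem_PSconeI h (by simp)

lemma zero_mem_PSconeI (D : ℕ) : (0 : MvPolynomial σ ℝ) ∈ PSconeI σ ℓ m q p I c w D := by
  simpa using smul_mem_PSconeI le_rfl (one_mem_PSconeI D)

variable (σ ℓ m q p I c w D) in
def psCone : PointedCone ℝ (MvPolynomial σ ℝ) where
  carrier := PSconeI σ ℓ m q p I c w D
  add_mem' := add_mem_PSconeI
  zero_mem' := zero_mem_PSconeI D
  smul_mem' a _ hg := smul_mem_PSconeI a.2 hg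

@[simp] lemma mem_psCone : g ∈ psCone σ ℓ m q p I c w D ↔ g ∈ PSconeI σ ℓ m q p I c w D := .rfl

end PSCone

namespace PointedCone

variable {V : Type*} [AddCommGroup V] [Module ℝ V]

def boundedBelow (K : PointedCone ℝ V) (e : V) : PointedCone ℝ V where
  carrier := {y | ∃ M : ℝ, M • e + y ∈ K}
  add_mem' := by
    rintro y₁ y₂ ⟨M₁, h₁⟩ ⟨M₂, h₂⟩
    exact ⟨M₁ + M₂, by simpa only [add_smul, add_add_add_comm] using K.add_mem h₁ h₂⟩
  zero_mem' := ⟨0, by simp⟩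
  smul_mem' := by
    rintro a y ⟨M, h⟩
    refine ⟨a * M, ?_⟩
    change ((a : ℝ) * M) • e + (a : ℝ) • y ∈ K
    simpa only [smul_add, smul_smul] using K.smul_mem a.2 h

variable {K : PointedCone ℝ V} {e v : V}

lemma nonneg_of_smul_mem_sup_hull {s : ℝ} (hne : {r : ℝ | v - r • e ∈ K}.Nonempty)
    (hs : s ∈ upperBounds {r : ℝ | v - r • e ∈ K}) {a : ℝ}
    (h : a • e ∈ K ⊔ hull ℝ {-(v - s • e)}) : 0 ≤ a := by
  obtain ⟨k, hk, z, hz, hkz⟩ := Submodule.mem_sup.1 h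
  obtain ⟨⟨t, ht⟩, rfl⟩ := Submodule.mem_span_singleton.1 hz
  replace hk : a • e + t • (v - s • e) ∈ K := by
    change k + t • -(v - s • e) = a • e at hkz
    rwa [← hkz, smul_neg, neg_add_cancel_right]
  rcases ht.eq_or_lt with rfl | ht
  · -- a negative multiple of `e` in `K` would push `v - r • e ∈ K` to arbitrarily large `r`
    by_contra! ha
    obtain ⟨r, hr⟩ := hne
    have hμ : 0 ≤ (s + 1 - r) / -a := div_nonneg (by linarith [hs hr]) (by linarith)
    have hr' : v - (s + 1) • e ∈ K := by
      have ha0 : a ≠ 0 := ha.ne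
      convert K.add_mem hr (K.smul_mem hμ (by simpa using hk)) using 1
      match_scalars <;> field_simp
      ring
    linarith [hs hr']
  · have hr : v - (s - a / t) • e ∈ K := by
      have heq : v - (s - a / t) • e = t⁻¹ • (a • e + t • (v - s • e)) := by
        have ht0 : t ≠ 0 := ht.ne'
        match_scalars <;> field_simp
        ring
      exact heq ▸ K.smul_mem (inv_nonneg.2 ht.le) hk
    simpa using (le_div_iff₀ ht).1 (show 0 ≤ a / t by linarith [hs hr])

lemma nonempty_setOf_sub_smul_mem (he : ∀ y, y ∈ K.boundedBelow e) (v : V) :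
    {r : ℝ | v - r • e ∈ K}.Nonempty := by
  obtain ⟨M, hM⟩ := he v
  refine ⟨-M, ?_⟩
  show v - (-M) • e ∈ K
  rwa [neg_smul, sub_neg_eq_add, add_comm]

lemma le_apply_of_sub_smul_mem {E : V →ₗ[ℝ] ℝ} (hE1 : E e = 1) (hEK : ∀ x ∈ K, 0 ≤ E x) {r : ℝ}
    (h : v - r • e ∈ K) : r ≤ E v := by
  have := hEK _ h
  rw [map_sub, map_smul, hE1, smul_eq_mul, mul_one] at this
  linarith

theorem exists_linearMap_nonneg_eq_sSup (he : ∀ y, y ∈ K.boundedBelow e)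
    (hbdd : BddAbove {r : ℝ | v - r • e ∈ K}) :
    ∃ E : V →ₗ[ℝ] ℝ, E e = 1 ∧ (∀ x ∈ K, 0 ≤ E x) ∧ E v = sSup {r : ℝ | v - r • e ∈ K} := by
  set S := {r : ℝ | v - r • e ∈ K}
  set u := v - sSup S • e
  have hne : S.Nonempty := nonempty_setOf_sub_smul_mem he v
  have hpos {a : ℝ} : a • e ∈ K ⊔ hull ℝ {-u} → 0 ≤ a :=
    nonneg_of_smul_mem_sup_hull hne fun _ hr => le_csSup hbdd hr
  have he0 : e ≠ 0 := fun h => by linarith [hpos (a := -1) (by simp [h])]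
  let f : V →ₗ.[ℝ] ℝ := LinearPMap.mkSpanSingleton e 1 he0
  have hf (a : ℝ) (h) : f ⟨a • e, h⟩ = a :=
    (LinearPMap.mkSpanSingleton'_apply e (1 : ℝ) _ a h).trans (by simp)
  obtain ⟨E, hEf, hEK⟩ := riesz_extension (K ⊔ hull ℝ {-u}) f
    (by
      rintro ⟨x, hx⟩ hxK
      obtain ⟨a, rfl⟩ := Submodule.mem_span_singleton.1 hx
      exact (hf a hx).symm ▸ hpos hxK)
    (fun y => by
      obtain ⟨M, hM⟩ := he y
      exact ⟨⟨M • e, Submodule.smul_mem _ _ (Submodule.mem_span_singleton_self e)⟩,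
        le_sup_left (a := K) hM⟩)
  have hE1 : E e = 1 := by
    simpa using (hEf _).trans (hf 1 (Submodule.smul_mem _ _ (Submodule.mem_span_singleton_self e)))
  have hEK' (x) (hx : x ∈ K) : 0 ≤ E x := hEK x (le_sup_left (a := K) hx)
  refine ⟨E, hE1, hEK', le_antisymm ?_
    (csSup_le hne fun r hr => le_apply_of_sub_smul_mem hE1 hEK' hr)⟩
  have := hEK (-u) (le_sup_right (a := K) (Submodule.subset_span rfl))
  simp only [u, map_neg, map_sub, map_smul, hE1, smul_eq_mul, mul_one] at this
  linarith

end PointedCone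

section Archimedean

variable {σ : Type} {ℓ m : ℕ} {q : Fin ℓ → MvPolynomial σ ℝ} {p : Fin m → MvPolynomial σ ℝ}
  {I : Ideal (MvPolynomial σ ℝ)} {c : Finset (Fin ℓ) ⊕ Fin m → ℕ} {w : ℕ}

lemma MvPolynomial.prod_map_X_toMultiset {R : Type*} [CommSemiring R] (α : σ →₀ ℕ) :
    ((Finsupp.toMultiset α).map X).prod = (monomial α 1 : MvPolynomial σ R) := by
  induction α using Finsupp.induction with
  | zero => simp
  | single_add a n f _ _ ih =>
    simp [Finsupp.toMultiset_add, ih, monomial_single_add, Multiset.map_nsmul, Multiset.prod_nsmul]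

lemma MvPolynomial.totalDegree_prod_map_X_le {R : Type*} [CommSemiring R] [Nontrivial R]
    (l : List σ) :
    ((l.map X).prod : MvPolynomial σ R).totalDegree ≤ l.length := by
  refine (totalDegree_list_prod _).trans ?_
  simp [Function.comp_def, totalDegree_X]

lemma C_pow_sub_sq_prod_X_mem {R : ℝ} (hR : 0 ≤ R)
    (hball : ∀ v : σ, C R - X v ^ 2 ∈ PSconeI σ ℓ m q p I c w 2) (l : List σ) :
    C (R ^ l.length) - (l.map X).prod ^ 2 ∈ PSconeI σ ℓ m q p I c w (2 * l.length) := by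
  induction l with
  | nil => simpa using zero_mem_PSconeI 0
  | cons v l ih =>
    have key : C (R ^ (l.length + 1)) - (X v * (l.map X).prod) ^ 2
        = (l.map X).prod ^ 2 * (C R - X v ^ 2) + R • (C (R ^ l.length) - (l.map X).prod ^ 2) := by
      rw [smul_eq_C_mul, pow_succ, map_mul]
      ring
    have hdeg := totalDegree_prod_map_X_le (R := ℝ) l
    simp only [List.map_cons, List.prod_cons, List.length_cons, key]
    exact add_mem_PSconeI (sq_mul_mem_PSconeI (hball v) (by omega))
      (PSconeI_mono (by omega) (smul_mem_PSconeI hR ih))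

lemma mul_mem_boundedBelow {D : ℕ} {u₁ u₂ : MvPolynomial σ ℝ} {M₁ M₂ : ℝ}
    (h₁ : C M₁ - u₁ ^ 2 ∈ PSconeI σ ℓ m q p I c w D)
    (h₂ : C M₂ - u₂ ^ 2 ∈ PSconeI σ ℓ m q p I c w D)
    (hu₁ : 2 * u₁.totalDegree ≤ D) (hu₂ : 2 * u₂.totalDegree ≤ D) :
    u₁ * u₂ ∈ (psCone σ ℓ m q p I c w D).boundedBelow 1 := by
  have hsq : (u₁ + u₂) ^ 2 ∈ PSconeI σ ℓ m q p I c w D :=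
    sq_mem_PSconeI (by have := totalDegree_add u₁ u₂; omega)
  have h2 : (2 : ℝ) • (u₁ * u₂) ∈ (psCone σ ℓ m q p I c w D).boundedBelow 1 := by
    refine ⟨M₁ + M₂, ?_⟩
    have key : (M₁ + M₂) • (1 : MvPolynomial σ ℝ) + (2 : ℝ) • (u₁ * u₂)
        = (u₁ + u₂) ^ 2 + (C M₁ - u₁ ^ 2) + (C M₂ - u₂ ^ 2) := by
      simp only [smul_eq_C_mul, map_add, map_ofNat]
      ring
    rw [key]
    exact add_mem_PSconeI (add_mem_PSconeI hsq h₁) h₂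
  simpa using PointedCone.smul_mem _ (inv_nonneg.2 zero_le_two) h2

lemma mul_mem_lineal_boundedBelow {D : ℕ} {u₁ u₂ : MvPolynomial σ ℝ} {M₁ M₂ : ℝ}
    (h₁ : C M₁ - u₁ ^ 2 ∈ PSconeI σ ℓ m q p I c w D)
    (h₂ : C M₂ - u₂ ^ 2 ∈ PSconeI σ ℓ m q p I c w D)
    (hu₁ : 2 * u₁.totalDegree ≤ D) (hu₂ : 2 * u₂.totalDegree ≤ D) :
    u₁ * u₂ ∈ ((psCone σ ℓ m q p I c w D).boundedBelow 1).lineal :=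
  PointedCone.mem_lineal.2 ⟨mul_mem_boundedBelow h₁ h₂ hu₁ hu₂, by
    simpa using mul_mem_boundedBelow (u₂ := -u₂) h₁ (by simpa using h₂) hu₁
      (by simpa using hu₂)⟩

lemma restrictTotalDegree_le_lineal_boundedBelow {R : ℝ} (hR : 0 ≤ R)
    (hball : ∀ v : σ, C R - X v ^ 2 ∈ PSconeI σ ℓ m q p I c w 2) (d : ℕ) :
    restrictTotalDegree σ ℝ (2 * d) ≤ ((psCone σ ℓ m q p I c w (2 * d)).boundedBelow 1).lineal := by
  rw [restrictTotalDegree, restrictSupport_eq_span, Submodule.span_le]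
  rintro _ ⟨α, hα, rfl⟩
  set l := (Finsupp.toMultiset α).toList
  have hl : l.length ≤ 2 * d := by
    rw [Multiset.length_toList, Finsupp.card_toMultiset]
    exact hα
  have hmon : (l.map X).prod = (monomial α 1 : MvPolynomial σ ℝ) := by
    rw [← prod_map_X_toMultiset, ← Multiset.prod_coe, ← Multiset.map_coe, Multiset.coe_toList]
  have hmem {l' : List σ} (h : l'.length ≤ d) :
      C (R ^ l'.length) - (l'.map X).prod ^ 2 ∈ PSconeI σ ℓ m q p I c w (2 * d) :=
    PSconeI_mono (by omega) (C_pow_sub_sq_prod_X_mem hR hball l')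
  have hdeg {l' : List σ} (h : l'.length ≤ d) :
      2 * ((l'.map X).prod : MvPolynomial σ ℝ).totalDegree ≤ 2 * d := by
    have := totalDegree_prod_map_X_le (R := ℝ) l'
    omega
  have htake : (l.take d).length ≤ d := by simp
  have hdrop : (l.drop d).length ≤ d := by simp; omega
  change monomial α 1 ∈ _
  rw [← hmon, ← List.take_append_drop d l, List.map_append, List.prod_append]
  exact mul_mem_lineal_boundedBelow (hmem htake) (hmem hdrop) (hdeg htake) (hdeg hdrop)

end Archimedean

lemma EReal.sSup_image_coe_eq_sInf_image_coe {S T : Set ℝ} (hS : S.Nonempty)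
    (hle : ∀ r ∈ S, ∀ t ∈ T, r ≤ t) (hT : BddAbove S → sSup S ∈ T) :
    sSup ((↑) '' S : Set EReal) = sInf ((↑) '' T) := by
  refine le_antisymm (sSup_le ?_) (not_lt.1 fun h => ?_)
  · rintro _ ⟨r, hr, rfl⟩
    refine le_sInf ?_
    rintro _ ⟨t, ht, rfl⟩
    exact EReal.coe_le_coe_iff.2 (hle r hr t ht)
  · obtain ⟨b, hb₁, hb₂⟩ := EReal.lt_iff_exists_real_btwn.1 h
    have hub : ∀ r ∈ S, r ≤ b := fun r hr =>
      EReal.coe_le_coe_iff.1 ((le_sSup (Set.mem_image_of_mem _ hr)).trans hb₁.le)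
    have hinf : sInf ((↑) '' T : Set EReal) ≤ (sSup S : ℝ) :=
      sInf_le (Set.mem_image_of_mem _ (hT ⟨b, hub⟩))
    exact hb₂.not_ge (hinf.trans (EReal.coe_le_coe_iff.2 (csSup_le hS hub)))

section PseudoExpectation

variable {σ : Type} {ℓ m : ℕ} {q : Fin ℓ → MvPolynomial σ ℝ} {p : Fin m → MvPolynomial σ ℝ}
  {I : Ideal (MvPolynomial σ ℝ)} {c : Finset (Fin ℓ) ⊕ Fin m → ℕ} {w D : ℕ}

variable (σ) in
def restrictTotalDegreeOne (D : ℕ) : restrictTotalDegree σ ℝ D :=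
  ⟨1, (mem_restrictTotalDegree σ D 1).2 (by simp)⟩

variable (σ ℓ m q p I c w D) in
def psConeRestrict : PointedCone ℝ (restrictTotalDegree σ ℝ D) :=
  (psCone σ ℓ m q p I c w D).comap (restrictTotalDegree σ ℝ D).subtype

lemma sub_C_mem_PSconeI_iff {P : restrictTotalDegree σ ℝ D} {r : ℝ} :
    (P : MvPolynomial σ ℝ) - C r ∈ PSconeI σ ℓ m q p I c w D ↔
      P - r • restrictTotalDegreeOne σ D ∈ psConeRestrict σ ℓ m q p I c w D := by
  simp [psConeRestrict, restrictTotalDegreeOne, smul_eq_C_mul]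

lemma setOf_sub_C_mem_PSconeI_eq (P : restrictTotalDegree σ ℝ D) :
    {r : ℝ | (P : MvPolynomial σ ℝ) - C r ∈ PSconeI σ ℓ m q p I c w D} =
      {r : ℝ | P - r • restrictTotalDegreeOne σ D ∈ psConeRestrict σ ℓ m q p I c w D} :=
  Set.ext fun _ => sub_C_mem_PSconeI_iff

lemma mem_PseudoExpI_iff {E : restrictTotalDegree σ ℝ D →ₗ[ℝ] ℝ} :
    E ∈ PseudoExpI σ ℓ m q p I c w D ↔
      E (restrictTotalDegreeOne σ D) = 1 ∧ ∀ x ∈ psConeRestrict σ ℓ m q p I c w D, 0 ≤ E x :=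
  ⟨fun hE => ⟨hE.1 _ rfl, hE.2⟩,
    fun hE => ⟨fun _ hg => (congrArg E (Subtype.ext hg)).trans hE.1, hE.2⟩⟩

lemma le_apply_of_mem_PseudoExpI {E : restrictTotalDegree σ ℝ D →ₗ[ℝ] ℝ}
    (hE : E ∈ PseudoExpI σ ℓ m q p I c w D) {P : restrictTotalDegree σ ℝ D} {r : ℝ}
    (hr : (P : MvPolynomial σ ℝ) - C r ∈ PSconeI σ ℓ m q p I c w D) : r ≤ E P := by
  rw [mem_PseudoExpI_iff] at hE
  exact PointedCone.le_apply_of_sub_smul_mem hE.1 hE.2 (sub_C_mem_PSconeI_iff.1 hr)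

variable {R : ℝ} {d : ℕ}

lemma mem_boundedBelow_psConeRestrict (hR : 0 ≤ R)
    (hball : ∀ v : σ, C R - X v ^ 2 ∈ PSconeI σ ℓ m q p I c w 2)
    (y : restrictTotalDegree σ ℝ (2 * d)) :
    y ∈ (psConeRestrict σ ℓ m q p I c w (2 * d)).boundedBelow (restrictTotalDegreeOne σ (2 * d)) :=
  (restrictTotalDegree_le_lineal_boundedBelow hR hball d y.2).1

lemma nonempty_setOf_sub_C_mem_PSconeI (hR : 0 ≤ R)
    (hball : ∀ v : σ, C R - X v ^ 2 ∈ PSconeI σ ℓ m q p I c w 2)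
    (P : restrictTotalDegree σ ℝ (2 * d)) :
    {r : ℝ | (P : MvPolynomial σ ℝ) - C r ∈ PSconeI σ ℓ m q p I c w (2 * d)}.Nonempty := by
  rw [setOf_sub_C_mem_PSconeI_eq]
  exact PointedCone.nonempty_setOf_sub_smul_mem (mem_boundedBelow_psConeRestrict hR hball) P

lemma exists_mem_PseudoExpI_apply_eq_sSup (hR : 0 ≤ R)
    (hball : ∀ v : σ, C R - X v ^ 2 ∈ PSconeI σ ℓ m q p I c w 2)
    (P : restrictTotalDegree σ ℝ (2 * d))
    (hbdd : BddAbove {r : ℝ | (P : MvPolynomial σ ℝ) - C r ∈ PSconeI σ ℓ m q p I c w (2 * d)}) :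
    ∃ E ∈ PseudoExpI σ ℓ m q p I c w (2 * d),
      E P = sSup {r : ℝ | (P : MvPolynomial σ ℝ) - C r ∈ PSconeI σ ℓ m q p I c w (2 * d)} := by
  rw [setOf_sub_C_mem_PSconeI_eq] at hbdd ⊢
  obtain ⟨E, hE1, hEK, hEP⟩ :=
    PointedCone.exists_linearMap_nonneg_eq_sSup (mem_boundedBelow_psConeRestrict hR hball) hbdd
  exact ⟨E, mem_PseudoExpI_iff.2 ⟨hE1, hEK⟩, hEP⟩

end PseudoExpectation

theorem statement16_general (d : ℕ) (σ : Type) (ℓ m : ℕ)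
    (q : Fin ℓ → MvPolynomial σ ℝ) (p : Fin m → MvPolynomial σ ℝ)
    (c : Finset (Fin ℓ) ⊕ Fin m → ℕ) (w : ℕ)
    (I : Ideal (MvPolynomial σ ℝ))
    (R : ℝ) (hR : 0 ≤ R)
    (hball : ∀ v : σ, (C R - X v ^ 2 : MvPolynomial σ ℝ) ∈ PSconeI σ ℓ m q p I c w 2)
    (P : restrictTotalDegree σ ℝ (2 * d)) :
    sSup ((fun r : ℝ => (r : EReal)) ''
        {r : ℝ | (P : MvPolynomial σ ℝ) - C r ∈ PSconeI σ ℓ m q p I c w (2 * d)})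
      = sInf ((fun E : restrictTotalDegree σ ℝ (2 * d) →ₗ[ℝ] ℝ =>
          ((E P : ℝ) : EReal)) '' PseudoExpI σ ℓ m q p I c w (2 * d)) ∧
    ((PseudoExpI σ ℓ m q p I c w (2 * d)).Nonempty →
      ∃ E ∈ PseudoExpI σ ℓ m q p I c w (2 * d),
        ∀ E' ∈ PseudoExpI σ ℓ m q p I c w (2 * d), E P ≤ E' P) := by
  have hne := nonempty_setOf_sub_C_mem_PSconeI hR hball P
  refine ⟨?_, fun ⟨E', hE'⟩ => ?_⟩
  · rw [← Set.image_image (fun t : ℝ => (t : EReal))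
      fun E : restrictTotalDegree σ ℝ (2 * d) →ₗ[ℝ] ℝ => E P]
    refine EReal.sSup_image_coe_eq_sInf_image_coe hne ?_ fun hbdd => ?_
    · rintro r hr _ ⟨E, hE, rfl⟩
      exact le_apply_of_mem_PseudoExpI hE hr
    · obtain ⟨E, hE, hEP⟩ := exists_mem_PseudoExpI_apply_eq_sSup hR hball P hbdd
      exact ⟨E, hE, hEP⟩
  · obtain ⟨E, hE, hEP⟩ := exists_mem_PseudoExpI_apply_eq_sSup hR hball P
      ⟨E' P, fun r hr => le_apply_of_mem_PseudoExpI hE' hr⟩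
    exact ⟨E, hE, fun E'' hE'' => hEP ▸ csSup_le hne fun r hr => le_apply_of_mem_PseudoExpI hE'' hr⟩

/-- **Corollary (zero-gap duality for PS mod an ideal).** If `Q ⊢^{c,I}_{w,2} R − x² ≥ 0`
for every variable `x` and some `R ≥ 0`, then
`sup{r : Q ⊢^{c,I}_{w,2d} p ≥ r} = inf{E(p) : E ∈ ℰ^{c,I}_{w,2d}(Q)}` in `ℝ ∪ {±∞}`,
and if `ℰ^{c,I}_{w,2d}(Q)` is nonempty the infimum is attained. -/
theorem statement16 (d : ℕ) (hd : 0 < d) (σ : Type) (ℓ m : ℕ)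
    (q : Fin ℓ → MvPolynomial σ ℝ) (p : Fin m → MvPolynomial σ ℝ)
    (c : Finset (Fin ℓ) ⊕ Fin m → ℕ) (hc : IsCutoffI q p c) (w : ℕ) (hw : 0 < w)
    (I : Ideal (MvPolynomial σ ℝ))
    (R : ℝ) (hR : 0 ≤ R)
    (hball : ∀ v : σ, (C R - X v ^ 2 : MvPolynomial σ ℝ) ∈ PSconeI σ ℓ m q p I c w 2)
    (P : restrictTotalDegree σ ℝ (2 * d)) :
    sSup ((fun r : ℝ => (r : EReal)) ''
        {r : ℝ | (P : MvPolynomial σ ℝ) - C r ∈ PSconeI σ ℓ m q p I c w (2 * d)})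
      = sInf ((fun E : restrictTotalDegree σ ℝ (2 * d) →ₗ[ℝ] ℝ =>
          ((E P : ℝ) : EReal)) '' PseudoExpI σ ℓ m q p I c w (2 * d)) ∧
    ((PseudoExpI σ ℓ m q p I c w (2 * d)).Nonempty →
      ∃ E ∈ PseudoExpI σ ℓ m q p I c w (2 * d),
        ∀ E' ∈ PseudoExpI σ ℓ m q p I c w (2 * d), E P ≤ E' P) :=
  statement16_general d σ ℓ m q p c w I R hR hball P
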